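/- arXiv:2203.07958 — 2 statements merged into one kernel-verified Lean document; each statement's English description precedes it below -/
import Mathlib

section
/- Let V be a real inner product space and let α₁, α₂, α₃, β₁, β̄₂, β̄₃ ∈ V satisfy: ⟪τ,τ⟫ = 2 for each of these vectors; ⟪α₂,β₁⟫ = −1, ⟪β₁,α₃⟫ = −1, ⟪α₃,β̄₂⟫ = −1, ⟪α₂,β̄₂⟫ = 0, ⟪α₂,α₃⟫ = 0, ⟪β₁,β̄₂⟫ = 0; ⟪α₁,β₁⟫ = −1, ⟪α₁,β̄₂⟫ = 1, ⟪α₁,α₂⟫ = ⟪α₁,α₃⟫ = 0; ⟪β̄₃,α₂⟫ = 1, ⟪β̄₃,α₃⟫ = −1, ⟪β̄₃,β₁⟫ = 0, ⟪β̄₃,β̄₂⟫ = 0 (the Gram relations of the Carter diagram E₆(a₂)). Set β₂ := −(α₃ + β₁ + α₂ + β̄₂). Then ⟪β₂,β₂⟫ = 2, ⟪β₂,α₂⟫ = −1, and β₂ is orthogonal to each of α₁, α₃, β₁, β̄₃ (the Gram relations of the Carter diagram E₆(a₁)). -/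
/-!
`β₂` is minus the highest root of the `A₄`-chain `α₂ – β₁ – α₃ – β̄₂`, so it is a root that is
orthogonal to the inner nodes of the chain and meets the end nodes with `-1`. Its inner products
with `α₁` and `β̄₃` are sums of their inner products with the chain, which cancel.
-/

open scoped RealInnerProductSpace

section A4Chain

variable {V : Type*} [NormedAddCommGroup V] [InnerProductSpace ℝ V]

/-- Four roots forming a simply-laced chain `a – b – c – d`, i.e. a basis of an `A₄`-subsystem. -/
structure IsA4Chain (a b c d : V) : Prop where
  inner_a_a : ⟪a, a⟫ = 2
  inner_b_b : ⟪b, b⟫ = 2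
  inner_c_c : ⟪c, c⟫ = 2
  inner_d_d : ⟪d, d⟫ = 2
  inner_a_b : ⟪a, b⟫ = -1
  inner_b_c : ⟪b, c⟫ = -1
  inner_c_d : ⟪c, d⟫ = -1
  inner_a_c : ⟪a, c⟫ = 0
  inner_a_d : ⟪a, d⟫ = 0
  inner_b_d : ⟪b, d⟫ = 0

theorem real_inner_neg_add_add_add_left (a b c d x : V) :
    ⟪-(a + b + c + d), x⟫ = -(⟪a, x⟫ + ⟪b, x⟫ + ⟪c, x⟫ + ⟪d, x⟫) := by
  simp only [inner_neg_left, inner_add_left]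

namespace IsA4Chain

variable {a b c d : V}

/-- `-(a + b + c + d)` is minus the highest root of the chain, hence itself a root. -/
theorem inner_neg_sum_self (h : IsA4Chain a b c d) :
    ⟪-(a + b + c + d), -(a + b + c + d)⟫ = 2 := by
  simp only [real_inner_neg_add_add_add_left, inner_neg_right, inner_add_right,
    real_inner_comm a b, real_inner_comm a c, real_inner_comm a d, real_inner_comm b c,
    real_inner_comm b d, real_inner_comm c d, h.inner_a_a, h.inner_b_b, h.inner_c_c,
    h.inner_d_d, h.inner_a_b, h.inner_b_c, h.inner_c_d, h.inner_a_c, h.inner_a_d, h.inner_b_d]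
  norm_num

theorem inner_neg_sum_left_end (h : IsA4Chain a b c d) : ⟪-(a + b + c + d), a⟫ = -1 := by
  rw [real_inner_neg_add_add_add_left, real_inner_comm a b, real_inner_comm a c,
    real_inner_comm a d, h.inner_a_a, h.inner_a_b, h.inner_a_c, h.inner_a_d]
  norm_num

theorem inner_neg_sum_second (h : IsA4Chain a b c d) : ⟪-(a + b + c + d), b⟫ = 0 := by
  rw [real_inner_neg_add_add_add_left, real_inner_comm b c, real_inner_comm b d,
    h.inner_a_b, h.inner_b_b, h.inner_b_c, h.inner_b_d]
  norm_num

theorem inner_neg_sum_third (h : IsA4Chain a b c d) : ⟪-(a + b + c + d), c⟫ = 0 := by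
  rw [real_inner_neg_add_add_add_left, real_inner_comm c d, h.inner_a_c, h.inner_b_c,
    h.inner_c_c, h.inner_c_d]
  norm_num

end IsA4Chain

end A4Chain

theorem stmt3_general {V : Type*} [NormedAddCommGroup V] [InnerProductSpace ℝ V]
    (α₁ α₂ α₃ β₁ βb₂ βb₃ : V)
    (h1 : ⟪α₂, α₂⟫ = 2)
    (h2 : ⟪α₃, α₃⟫ = 2)
    (h3 : ⟪β₁, β₁⟫ = 2)
    (h4 : ⟪βb₂, βb₂⟫ = 2)
    (h6 : ⟪α₂, β₁⟫ = -1)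
    (h7 : ⟪β₁, α₃⟫ = -1)
    (h8 : ⟪α₃, βb₂⟫ = -1)
    (h9 : ⟪α₂, βb₂⟫ = 0)
    (h10 : ⟪α₂, α₃⟫ = 0)
    (h11 : ⟪β₁, βb₂⟫ = 0)
    (h12 : ⟪α₁, β₁⟫ = -1)
    (h13 : ⟪α₁, βb₂⟫ = 1)
    (h14 : ⟪α₁, α₂⟫ = 0)
    (h15 : ⟪α₁, α₃⟫ = 0)
    (h16 : ⟪βb₃, α₂⟫ = 1)
    (h17 : ⟪βb₃, α₃⟫ = -1)
    (h18 : ⟪βb₃, β₁⟫ = 0)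
    (h19 : ⟪βb₃, βb₂⟫ = 0)
    (β₂ : V) (hdef : β₂ = -(α₃ + β₁ + α₂ + βb₂)) :
    ⟪β₂, β₂⟫ = 2 ∧
    ⟪β₂, α₂⟫ = -1 ∧
    ⟪β₂, α₁⟫ = 0 ∧
    ⟪β₂, α₃⟫ = 0 ∧
    ⟪β₂, β₁⟫ = 0 ∧
    ⟪β₂, βb₃⟫ = 0 := by
  have hchain : IsA4Chain α₂ β₁ α₃ βb₂ := ⟨h1, h3, h2, h4, h6, h7, h8, h10, h9, h11⟩
  have hβ₂ : β₂ = -(α₂ + β₁ + α₃ + βb₂) := by rw [hdef]; abel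
  have hα₁ : ⟪β₂, α₁⟫ = 0 := by
    rw [hβ₂, real_inner_neg_add_add_add_left, real_inner_comm α₁, real_inner_comm α₁,
      real_inner_comm α₁, real_inner_comm α₁, h12, h13, h14, h15]
    norm_num
  have hβb₃ : ⟪β₂, βb₃⟫ = 0 := by
    rw [hβ₂, real_inner_neg_add_add_add_left, real_inner_comm βb₃, real_inner_comm βb₃,
      real_inner_comm βb₃, real_inner_comm βb₃, h16, h17, h18, h19]
    norm_num
  subst hβ₂
  exact ⟨hchain.inner_neg_sum_self, hchain.inner_neg_sum_left_end, hα₁,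
    hchain.inner_neg_sum_third, hchain.inner_neg_sum_second, hβb₃⟩

theorem stmt3 {V : Type*} [NormedAddCommGroup V] [InnerProductSpace ℝ V]
    (α₁ α₂ α₃ β₁ βb₂ βb₃ : V)
    (h0 : ⟪α₁, α₁⟫ = 2)
    (h1 : ⟪α₂, α₂⟫ = 2)
    (h2 : ⟪α₃, α₃⟫ = 2)
    (h3 : ⟪β₁, β₁⟫ = 2)
    (h4 : ⟪βb₂, βb₂⟫ = 2)
    (h5 : ⟪βb₃, βb₃⟫ = 2)
    (h6 : ⟪α₂, β₁⟫ = -1)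
    (h7 : ⟪β₁, α₃⟫ = -1)
    (h8 : ⟪α₃, βb₂⟫ = -1)
    (h9 : ⟪α₂, βb₂⟫ = 0)
    (h10 : ⟪α₂, α₃⟫ = 0)
    (h11 : ⟪β₁, βb₂⟫ = 0)
    (h12 : ⟪α₁, β₁⟫ = -1)
    (h13 : ⟪α₁, βb₂⟫ = 1)
    (h14 : ⟪α₁, α₂⟫ = 0)
    (h15 : ⟪α₁, α₃⟫ = 0)
    (h16 : ⟪βb₃, α₂⟫ = 1)
    (h17 : ⟪βb₃, α₃⟫ = -1)
    (h18 : ⟪βb₃, β₁⟫ = 0)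
    (h19 : ⟪βb₃, βb₂⟫ = 0)
    (β₂ : V) (hdef : β₂ = -(α₃ + β₁ + α₂ + βb₂)) :
    ⟪β₂, β₂⟫ = 2 ∧
    ⟪β₂, α₂⟫ = -1 ∧
    ⟪β₂, α₁⟫ = 0 ∧
    ⟪β₂, α₃⟫ = 0 ∧
    ⟪β₂, β₁⟫ = 0 ∧
    ⟪β₂, βb₃⟫ = 0 :=
  stmt3_general α₁ α₂ α₃ β₁ βb₂ βb₃ h1 h2 h3 h4 h6 h7 h8 h9 h10 h11 h12 h13 h14 h15 h16 h17 h18 h19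
    β₂ hdef
end

section
/- Let V be a real inner product space and let ᾱ₁, α₂, ᾱ₃, ᾱ₄, β₁, β₂, β₃, β₄ ∈ V satisfy: ⟪ᾱ₄,ᾱ₄⟫ = ⟪β₂,β₂⟫ = ⟪β₃,β₃⟫ = ⟪β₄,β₄⟫ = 2; ⟪ᾱ₄,β₂⟫ = ⟪ᾱ₄,β₃⟫ = ⟪ᾱ₄,β₄⟫ = −1 and ⟪β₂,β₃⟫ = ⟪β₂,β₄⟫ = ⟪β₃,β₄⟫ = 0; ⟪ᾱ₁,β₂⟫ + ⟪ᾱ₁,β₄⟫ = 0 and ⟪ᾱ₁,β₃⟫ = ⟪ᾱ₁,ᾱ₄⟫ = 0; ⟪ᾱ₃,β₃⟫ + ⟪ᾱ₃,β₄⟫ = 0 and ⟪ᾱ₃,β₂⟫ = ⟪ᾱ₃,ᾱ₄⟫ = 0; ⟪β₁,β₂⟫ = ⟪β₁,β₃⟫ = ⟪β₁,β₄⟫ = ⟪β₁,ᾱ₄⟫ = 0 (the relevant Gram relations of the Carter diagram E₈(a₈)). Set β̄₄ := −(2ᾱ₄ + β₄ + β₂ + β₃). Then ⟪β̄₄,β̄₄⟫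 = 2, ⟪β̄₄,ᾱ₄⟫ = −1, and β̄₄ is orthogonal to each of ᾱ₁, ᾱ₃, β₁, β₂, β₃ (the Gram relations of the Carter diagram E₈(a₇)). -/
/-!
Pairing `β̄₄ = -(2ᾱ₄ + β₂ + β₃ + β₄)` with any `x` gives `-(2⟪x, ᾱ₄⟫ + ⟪x, β₂⟫ + ⟪x, β₃⟫ + ⟪x, β₄⟫)`,
so each required pairing is a linear combination of the given Gram relations; in particular
`⟪β̄₄, β̄₄⟫ = -(2 · (-1) + 0 + 0 + 0) = 2` once the pairings of `β̄₄` with the center and leaves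
of the `D₄` star are known.
-/

open scoped RealInnerProductSpace

section D4

variable {V : Type*} [NormedAddCommGroup V] [InnerProductSpace ℝ V]

/-- The minimal root of the `D₄` subsystem with center `a` and leaves `b₂ b₃ b₄`. -/
def d4MinimalRoot (a b₂ b₃ b₄ : V) : V := -((2 : ℝ) • a + b₄ + b₂ + b₃)

theorem inner_d4MinimalRoot_left (a b₂ b₃ b₄ x : V) :
    ⟪d4MinimalRoot a b₂ b₃ b₄, x⟫ = -(2 * ⟪x, a⟫ + ⟪x, b₂⟫ + ⟪x, b₃⟫ + ⟪x, b₄⟫) := by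
  rw [real_inner_comm]
  simp only [d4MinimalRoot, inner_neg_right, inner_add_right, real_inner_smul_right]
  ring

theorem inner_self_d4MinimalRoot {a b₂ b₃ b₄ : V}
    (hc : ⟪d4MinimalRoot a b₂ b₃ b₄, a⟫ = -1) (h₂ : ⟪d4MinimalRoot a b₂ b₃ b₄, b₂⟫ = 0)
    (h₃ : ⟪d4MinimalRoot a b₂ b₃ b₄, b₃⟫ = 0) (h₄ : ⟪d4MinimalRoot a b₂ b₃ b₄, b₄⟫ = 0) :
    ⟪d4MinimalRoot a b₂ b₃ b₄, d4MinimalRoot a b₂ b₃ b₄⟫ = 2 := by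
  rw [inner_d4MinimalRoot_left, hc, h₂, h₃, h₄]
  norm_num

end D4

theorem stmt15_general {V : Type*} [NormedAddCommGroup V] [InnerProductSpace ℝ V]
    (αb₁ αb₃ αb₄ β₁ β₂ β₃ β₄ : V)
    (h0 : ⟪αb₄, αb₄⟫ = 2)
    (h1 : ⟪β₂, β₂⟫ = 2)
    (h2 : ⟪β₃, β₃⟫ = 2)
    (h3 : ⟪β₄, β₄⟫ = 2)
    (h4 : ⟪αb₄, β₂⟫ = -1)
    (h5 : ⟪αb₄, β₃⟫ = -1)
    (h6 : ⟪αb₄, β₄⟫ = -1)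
    (h7 : ⟪β₂, β₃⟫ = 0)
    (h8 : ⟪β₂, β₄⟫ = 0)
    (h9 : ⟪β₃, β₄⟫ = 0)
    (h10 : ⟪αb₁, β₂⟫ + ⟪αb₁, β₄⟫ = 0)
    (h11 : ⟪αb₁, β₃⟫ = 0)
    (h12 : ⟪αb₁, αb₄⟫ = 0)
    (h13 : ⟪αb₃, β₃⟫ + ⟪αb₃, β₄⟫ = 0)
    (h14 : ⟪αb₃, β₂⟫ = 0)
    (h15 : ⟪αb₃, αb₄⟫ = 0)
    (h16 : ⟪β₁, β₂⟫ = 0)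
    (h17 : ⟪β₁, β₃⟫ = 0)
    (h18 : ⟪β₁, β₄⟫ = 0)
    (h19 : ⟪β₁, αb₄⟫ = 0)
    (βb₄ : V) (hdef : βb₄ = -((2:ℝ) • αb₄ + β₄ + β₂ + β₃)) :
    ⟪βb₄, βb₄⟫ = 2 ∧
    ⟪βb₄, αb₄⟫ = -1 ∧
    ⟪βb₄, αb₁⟫ = 0 ∧
    ⟪βb₄, αb₃⟫ = 0 ∧
    ⟪βb₄, β₁⟫ = 0 ∧
    ⟪βb₄, β₂⟫ = 0 ∧
    ⟪βb₄, β₃⟫ = 0 := by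
  change βb₄ = d4MinimalRoot αb₄ β₂ β₃ β₄ at hdef
  subst hdef
  simp only [inner_d4MinimalRoot_left _ _ _ _ αb₁, inner_d4MinimalRoot_left _ _ _ _ αb₃,
    inner_d4MinimalRoot_left _ _ _ _ β₁]
  have center : ⟪d4MinimalRoot αb₄ β₂ β₃ β₄, αb₄⟫ = -1 := by
    rw [inner_d4MinimalRoot_left]; linarith
  have leaf₂ : ⟪d4MinimalRoot αb₄ β₂ β₃ β₄, β₂⟫ = 0 := by
    rw [inner_d4MinimalRoot_left]; linarith [real_inner_comm αb₄ β₂]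
  have leaf₃ : ⟪d4MinimalRoot αb₄ β₂ β₃ β₄, β₃⟫ = 0 := by
    rw [inner_d4MinimalRoot_left]; linarith [real_inner_comm αb₄ β₃, real_inner_comm β₂ β₃]
  have leaf₄ : ⟪d4MinimalRoot αb₄ β₂ β₃ β₄, β₄⟫ = 0 := by
    rw [inner_d4MinimalRoot_left]
    linarith [real_inner_comm αb₄ β₄, real_inner_comm β₂ β₄, real_inner_comm β₃ β₄]
  exact ⟨inner_self_d4MinimalRoot center leaf₂ leaf₃ leaf₄, center, by linarith,
    by linarith, by linarith, leaf₂, leaf₃⟩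

theorem stmt15 {V : Type*} [NormedAddCommGroup V] [InnerProductSpace ℝ V]
    (αb₁ α₂ αb₃ αb₄ β₁ β₂ β₃ β₄ : V)
    (h0 : ⟪αb₄, αb₄⟫ = 2)
    (h1 : ⟪β₂, β₂⟫ = 2)
    (h2 : ⟪β₃, β₃⟫ = 2)
    (h3 : ⟪β₄, β₄⟫ = 2)
    (h4 : ⟪αb₄, β₂⟫ = -1)
    (h5 : ⟪αb₄, β₃⟫ = -1)
    (h6 : ⟪αb₄, β₄⟫ = -1)
    (h7 : ⟪β₂, β₃⟫ = 0)
    (h8 : ⟪β₂, β₄⟫ = 0)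
    (h9 : ⟪β₃, β₄⟫ = 0)
    (h10 : ⟪αb₁, β₂⟫ + ⟪αb₁, β₄⟫ = 0)
    (h11 : ⟪αb₁, β₃⟫ = 0)
    (h12 : ⟪αb₁, αb₄⟫ = 0)
    (h13 : ⟪αb₃, β₃⟫ + ⟪αb₃, β₄⟫ = 0)
    (h14 : ⟪αb₃, β₂⟫ = 0)
    (h15 : ⟪αb₃, αb₄⟫ = 0)
    (h16 : ⟪β₁, β₂⟫ = 0)
    (h17 : ⟪β₁, β₃⟫ = 0)
    (h18 : ⟪β₁, β₄⟫ = 0)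
    (h19 : ⟪β₁, αb₄⟫ = 0)
    (βb₄ : V) (hdef : βb₄ = -((2:ℝ) • αb₄ + β₄ + β₂ + β₃)) :
    ⟪βb₄, βb₄⟫ = 2 ∧
    ⟪βb₄, αb₄⟫ = -1 ∧
    ⟪βb₄, αb₁⟫ = 0 ∧
    ⟪βb₄, αb₃⟫ = 0 ∧
    ⟪βb₄, β₁⟫ = 0 ∧
    ⟪βb₄, β₂⟫ = 0 ∧
    ⟪βb₄, β₃⟫ = 0 :=
  stmt15_general αb₁ αb₃ αb₄ β₁ β₂ β₃ β₄ h0 h1 h2 h3 h4 h5 h6 h7 h8 h9 h10 h11 h12 h13 h14 h15 h16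
    h17 h18 h19 βb₄ hdef
end
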